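/- arXiv:2503.03369 — 4 statements merged into one kernel-verified Lean document; each statement's English description precedes it below -/
import Mathlib

section
/- If y: ℝ → ℝ is three times differentiable on an open interval I, y'(x) > 0 and y(x) ≠ x on I, and y satisfies (y - x)·y'' - 2y'(1 + y') = 2C₀(y')^{3/2} on I for a constant C₀ (i.e., y solves y'' + 2(y' + C₀(y')^{3/2} + (y')²)/(x - y) = 0), then y satisfies the Schwarz equation y'''·y' - (3/2)(y'')² = 0 on I. -/
/-- If `y` is three times differentiable on an open interval, with `y' > 0` and `y ≠ x` there,
and satisfies `(y - x) y'' - 2 y' (1 + y') = 2 C₀ (y')^{3/2}`, then `y` satisfies the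
Schwarz equation `y''' y' - (3/2) (y'')² = 0` on the interval. -/
theorem second_order_ode_implies_schwarz (a b : ℝ) (y : ℝ → ℝ) (C₀ : ℝ)
    (hy : ContDiffOn ℝ 3 y (Set.Ioo a b))
    (hpos : ∀ x ∈ Set.Ioo a b, 0 < deriv y x)
    (hne : ∀ x ∈ Set.Ioo a b, y x ≠ x)
    (hode : ∀ x ∈ Set.Ioo a b,
      (y x - x) * deriv (deriv y) x - 2 * deriv y x * (1 + deriv y x)
        = 2 * C₀ * (deriv y x) ^ ((3 : ℝ) / 2)) :
    ∀ x ∈ Set.Ioo a b,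
      deriv (deriv (deriv y)) x * deriv y x - (3 / 2) * (deriv (deriv y) x) ^ 2 = 0 := by
  intro x₀ hx₀
  have hs : IsOpen (Set.Ioo a b) := isOpen_Ioo
  have h2 : ContDiffOn ℝ 2 (deriv y) (Set.Ioo a b) :=
    hy.deriv_of_isOpen hs (by norm_num)
  have h1 : ContDiffOn ℝ 1 (deriv (deriv y)) (Set.Ioo a b) :=
    h2.deriv_of_isOpen hs (by norm_num)
  have hnhds : Set.Ioo a b ∈ nhds x₀ := hs.mem_nhds hx₀
  have hyd : HasDerivAt y (deriv y x₀) x₀ :=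
    (((hy.differentiableOn (by norm_num)).differentiableAt hnhds)).hasDerivAt
  have hy1 : HasDerivAt (deriv y) (deriv (deriv y) x₀) x₀ :=
    (((h2.differentiableOn (by norm_num)).differentiableAt hnhds)).hasDerivAt
  have hy2 : HasDerivAt (deriv (deriv y)) (deriv (deriv (deriv y)) x₀) x₀ :=
    (((h1.differentiableOn (by norm_num)).differentiableAt hnhds)).hasDerivAt
  set u := deriv y x₀ with hu_def
  set v := deriv (deriv y) x₀ with hv_def
  set w := deriv (deriv (deriv y)) x₀ with hw_def
  have hu : 0 < u := hpos x₀ hx₀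
  have hd : y x₀ - x₀ ≠ 0 := sub_ne_zero.mpr (hne x₀ hx₀)
  -- derivative of t ↦ (deriv y t) ^ (3/2)
  have hr : HasDerivAt (fun t => (deriv y t) ^ ((3 : ℝ) / 2))
      (((3 : ℝ) / 2 * u ^ ((3 : ℝ) / 2 - 1)) * v) x₀ :=
    by have := (Real.hasDerivAt_rpow_const (p := (3 : ℝ) / 2) (Or.inl hu.ne')).comp x₀ hy1; exact this
  -- derivative of the whole ODE expression
  set D : ℝ := ((u - 1) * v + (y x₀ - x₀) * w)
      - (2 * v * (1 + u) + 2 * u * v)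
      - 2 * C₀ * ((3 : ℝ) / 2 * u ^ ((3 : ℝ) / 2 - 1) * v) with hD_def
  have hG : HasDerivAt (fun t =>
      (y t - t) * deriv (deriv y) t - 2 * deriv y t * (1 + deriv y t)
        - 2 * C₀ * (deriv y t) ^ ((3 : ℝ) / 2)) D x₀ := by
    have h₁ : HasDerivAt (fun t => (y t - t) * deriv (deriv y) t)
        ((deriv y x₀ - 1) * deriv (deriv y) x₀ + (y x₀ - x₀) * w) x₀ :=
      (hyd.sub (hasDerivAt_id x₀)).mul hy2
    have h₂ : HasDerivAt (fun t => 2 * deriv y t * (1 + deriv y t))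
        (2 * v * (1 + u) + 2 * u * v) x₀ := by
      exact (hy1.const_mul 2).mul (hy1.const_add 1)
    have h₃ : HasDerivAt (fun t => 2 * C₀ * (deriv y t) ^ ((3 : ℝ) / 2))
        (2 * C₀ * ((3 : ℝ) / 2 * u ^ ((3 : ℝ) / 2 - 1) * v)) x₀ := hr.const_mul _
    exact (h₁.sub h₂).sub h₃
  -- The expression vanishes on the interval, so its derivative at x₀ is 0.
  have hD0 : D = 0 := by
    have hzero : HasDerivAt (fun _ : ℝ => (0 : ℝ)) D x₀ := by
      apply hG.congr_of_eventuallyEq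
      filter_upwards [hnhds] with t ht
      have := hode t ht
      linarith
    have := hzero.unique (hasDerivAt_const x₀ (0 : ℝ))
    linarith
  -- Algebra
  set S := u ^ ((1 : ℝ) / 2) with hS_def
  have hSS : S * S = u := by
    rw [hS_def, ← Real.rpow_add hu]
    norm_num
  have h32 : u ^ ((3 : ℝ) / 2) = S * u := by
    have h : ((3 : ℝ) / 2) = 1 / 2 + 1 := by norm_num
    rw [hS_def, h, Real.rpow_add hu, Real.rpow_one]
  have h12 : u ^ ((3 : ℝ) / 2 - 1) = S := by
    rw [hS_def]; norm_num
  have hE1 : (y x₀ - x₀) * v - 2 * u * (1 + u) = 2 * C₀ * (S * u) := by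
    have := hode x₀ hx₀
    rw [h32] at this
    exact this
  rw [hD_def, h12] at hD0
  have key : (y x₀ - x₀) * (2 * u * w - 3 * v ^ 2) = 0 := by
    linear_combination 2 * u * hD0 - 3 * v * hE1
  have : 2 * u * w - 3 * v ^ 2 = 0 := by
    rcases mul_eq_zero.mp key with h | h
    · exact absurd h hd
    · exact h
  linarith
end

section
/- For a three times differentiable function y with y' > 0 and y ≠ x on an open interval, the derivative of the expression F(x) = ((y - x)·y'' - 2y'·(1 + y'))/(2·(y')^{3/2}) equals ((y - x)/(2·√(y'))) · (y'''/y' - (3/2)·(y''/y')²). -/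
/-- For `y` three times differentiable with `y' > 0` and `y ≠ x` on an open interval, the
derivative of `F = ((y - x) y'' - 2 y'(1 + y'))/(2 (y')^{3/2})` equals
`((y - x)/(2 √(y'))) (y'''/y' - (3/2)(y''/y')²)`. -/
theorem first_integral_derivative (a b : ℝ) (y : ℝ → ℝ)
    (hy : ContDiffOn ℝ 3 y (Set.Ioo a b))
    (hpos : ∀ x ∈ Set.Ioo a b, 0 < deriv y x)
    (hne : ∀ x ∈ Set.Ioo a b, y x ≠ x)
    (F : ℝ → ℝ)
    (hF : F = fun x =>
      ((y x - x) * deriv (deriv y) x - 2 * deriv y x * (1 + deriv y x))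
        / (2 * (deriv y x) ^ ((3 : ℝ) / 2))) :
    ∀ x ∈ Set.Ioo a b,
      deriv F x = ((y x - x) / (2 * Real.sqrt (deriv y x)))
        * (deriv (deriv (deriv y)) x / deriv y x
            - (3 / 2) * (deriv (deriv y) x / deriv y x) ^ 2) := by
  subst hF
  intro x hx
  have hO : IsOpen (Set.Ioo a b) := isOpen_Ioo
  have hmem : Set.Ioo a b ∈ nhds x := hO.mem_nhds hx
  have hy1 : ContDiffOn ℝ 2 (deriv y) (Set.Ioo a b) :=
    hy.deriv_of_isOpen hO (by norm_num)
  have hy2 : ContDiffOn ℝ 1 (deriv (deriv y)) (Set.Ioo a b) :=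
    hy1.deriv_of_isOpen hO (by norm_num)
  set p := deriv y x with hp_def
  set q := deriv (deriv y) x with hq_def
  set r := deriv (deriv (deriv y)) x with hr_def
  have hp : 0 < p := hpos x hx
  have hdy : HasDerivAt y p x :=
    ((hy.differentiableOn (by norm_num)).differentiableAt hmem).hasDerivAt
  have hddy : HasDerivAt (deriv y) q x :=
    ((hy1.differentiableOn (by norm_num)).differentiableAt hmem).hasDerivAt
  have hdddy : HasDerivAt (deriv (deriv y)) r x :=
    ((hy2.differentiableOn one_ne_zero).differentiableAt hmem).hasDerivAt
  have hsub : HasDerivAt (fun x => y x - x) (p - 1) x := hdy.sub (hasDerivAt_id x)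
  have hN : HasDerivAt (fun x => (y x - x) * deriv (deriv y) x
      - 2 * deriv y x * (1 + deriv y x))
      (((p - 1) * q + (y x - x) * r) - ((2 * q) * (1 + p) + (2 * p) * q)) x :=
    (hsub.mul hdddy).sub ((hddy.const_mul 2).mul (hddy.const_add 1))
  have hD : HasDerivAt (fun x => 2 * (deriv y x) ^ ((3 : ℝ) / 2))
      (2 * (q * ((3 : ℝ) / 2) * p ^ ((3 : ℝ) / 2 - 1))) x :=
    (hddy.rpow_const (Or.inl hp.ne')).const_mul 2
  have hD0 : 2 * p ^ ((3 : ℝ) / 2) ≠ 0 := by positivity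
  have hder := (hN.div hD hD0).deriv
  simp only [Pi.div_def] at hder
  rw [hder]
  simp only [← hp_def, ← hq_def, ← hr_def]
  -- now the algebra
  have hs0 : 0 < Real.sqrt p := Real.sqrt_pos.2 hp
  set s := Real.sqrt p with hs_def
  have hps : p = s ^ 2 := (Real.sq_sqrt hp.le).symm
  have h32 : p ^ ((3 : ℝ) / 2) = s ^ 3 := by
    rw [show ((3 : ℝ) / 2) = 1 + 1 / 2 by norm_num, Real.rpow_add hp, Real.rpow_one,
      ← Real.sqrt_eq_rpow, ← hs_def, hps]
    ring
  have h12 : p ^ ((3 : ℝ) / 2 - 1) = s := by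
    rw [show ((3 : ℝ) / 2 - 1) = 1 / 2 by norm_num, ← Real.sqrt_eq_rpow]
  rw [h32, h12, hps]
  have hsne : s ≠ 0 := hs0.ne'
  field_simp
  ring
end

section
/- For real constants c₁ ≠ 0, c₂, c₃, the sequence y(n) = 1/(c₁n + c₂) + c₃ satisfies the discrete Schwarz (Winternitz) equation (y(n+2) - y(n))·(y(n+1) - y(n-1)) = 4·(y(n+2) - y(n+1))·(y(n) - y(n-1)) for all integers n such that c₁k + c₂ ≠ 0 for k ∈ {n-1, n, n+1, n+2}. -/
/-- The sequence `y n = 1/(c₁ n + c₂) + c₃` (with `c₁ ≠ 0`) satisfies the discrete Schwarz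
(Winternitz) equation with `K = 4`:
`(y(n+2) - y n)(y(n+1) - y(n-1)) = 4 (y(n+2) - y(n+1))(y n - y(n-1))`,
for all `n` such that `c₁ k + c₂ ≠ 0` for `k ∈ {n-1, n, n+1, n+2}`. -/
theorem winternitz_general_solution (c₁ c₂ c₃ : ℝ) (hc : c₁ ≠ 0)
    (y : ℤ → ℝ) (hy : y = fun n : ℤ => 1 / (c₁ * (n : ℝ) + c₂) + c₃) :
    ∀ n : ℤ, (∀ k : ℤ, k ∈ ({n - 1, n, n + 1, n + 2} : Set ℤ) → c₁ * (k : ℝ) + c₂ ≠ 0) →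
      (y (n + 2) - y n) * (y (n + 1) - y (n - 1))
        = 4 * (y (n + 2) - y (n + 1)) * (y n - y (n - 1)) := by
  intro n h
  have h1 := h (n - 1) (by simp)
  have h2 := h n (by simp)
  have h3 := h (n + 1) (by simp)
  have h4 := h (n + 2) (by simp)
  subst hy
  simp only [Int.cast_add, Int.cast_sub, Int.cast_one, Int.cast_ofNat] at *
  field_simp
  ring
end

section
/- Suppose a real sequence y(n) satisfies the four-point recurrence (y(n+2) - y(n))·(y(n+1) - y(n-1)) = 4·(y(n+2) - y(n+1))·(y(n) - y(n-1)) with all consecutive differences y(k+1) - y(k) nonzero and y(n+1) ≠ y(n-1), y(n+2) ≠ y(n). Then the quantity I(n) = 4/(y(n+1) - y(n-1)) - 1/(y(n+1) - y(n)) - 1/(y(n) - y(n-1)) satisfies I(n+1) = I(n); that is, I is a first integral (invariant) of the scheme. -/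
lemma winternitz_key (a b c d : ℝ) (hb : b - a ≠ 0) (hc : c - b ≠ 0) (hd : d - c ≠ 0)
    (hca : c - a ≠ 0) (hdb : d - b ≠ 0)
    (hs : (d - b) * (c - a) = 4 * (d - c) * (b - a)) :
    4 / (d - b) - 1 / (d - c) - 1 / (c - b) = 4 / (c - a) - 1 / (c - b) - 1 / (b - a) := by
  field_simp
  linear_combination ((a - b - c + d) * (c - b)) * hs

/-- If a real sequence satisfies the Winternitz scheme with `K = 4`, with nonzero consecutive
differences and `y(n+1) ≠ y(n-1)`, `y(n+2) ≠ y n`, then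
`I n = 4/(y(n+1) - y(n-1)) - 1/(y(n+1) - y n) - 1/(y n - y(n-1))` satisfies `I (n+1) = I n`. -/
theorem winternitz_first_integral (y : ℤ → ℝ)
    (hscheme : ∀ n : ℤ, (y (n + 2) - y n) * (y (n + 1) - y (n - 1))
        = 4 * (y (n + 2) - y (n + 1)) * (y n - y (n - 1)))
    (hdiff : ∀ k : ℤ, y (k + 1) - y k ≠ 0)
    (hskip : ∀ n : ℤ, y (n + 1) ≠ y (n - 1) ∧ y (n + 2) ≠ y n)
    (I : ℤ → ℝ)
    (hI : I = fun n => 4 / (y (n + 1) - y (n - 1)) - 1 / (y (n + 1) - y n)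
        - 1 / (y n - y (n - 1))) :
    ∀ n : ℤ, I (n + 1) = I n := by
  intro n
  subst hI
  have e1 : n + 1 + 1 = n + 2 := by ring
  have e2 : n + 1 - 1 = n := by ring
  simp only [e1, e2]
  have h1 : y (n + 1) - y n ≠ 0 := hdiff n
  have h2 : y (n + 2) - y (n + 1) ≠ 0 := by
    have := hdiff (n + 1); rwa [e1] at this
  have h3 : y n - y (n - 1) ≠ 0 := by
    have := hdiff (n - 1); rwa [show n - 1 + 1 = n by ring] at this
  have h4 : y (n + 1) - y (n - 1) ≠ 0 := sub_ne_zero.mpr (hskip n).1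
  have h5 : y (n + 2) - y n ≠ 0 := sub_ne_zero.mpr (hskip n).2
  exact winternitz_key (y (n - 1)) (y n) (y (n + 1)) (y (n + 2)) h3 h1 h2 h4 h5 (hscheme n)
end
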